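/- arXiv:1509.03712 — 2 statements merged into one kernel-verified Lean document; each statement's English description precedes it below -/
import Mathlib

section
/- Let f : ℕ → ℕ satisfy f(n) ≥ 1 for n ≥ 1, f(n) tends to infinity, and f(n)/n tends to 0, and set f'(n) = ⌈n/f(n)⌉. Then the language L_f = { w ∈ {0,1}^n : n ∈ ℕ, and for all 1 ≤ i ≤ n, the i-th symbol of w is 1 iff i is a positive multiple of f'(n) } is recognized by a deterministic finite automaton with at most f(n) inkdots of advice on inputs of length n. -/
/-- The marked word: the i-th symbol of `w` becomes `(w_i, true)` if `i ∈ S`,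
and `(w_i, false)` otherwise. -/
def markWord {α : Type*} (w : List α) (S : Finset ℕ) : List (α × Bool) :=
  w.zipIdx.map (fun p => (p.1, decide (p.2 ∈ S)))

/-- `L` is recognized by a deterministic finite automaton with at most `a n`
inkdots of advice on inputs of length `n`. -/
def RecognizedWithInkdots {α : Type*} (L : Set (List α)) (a : ℕ → ℕ) : Prop :=
  ∃ (σ : Type) (_ : Fintype σ) (M : DFA (α × Bool) σ) (h : ℕ → Finset ℕ),
    (∀ n, ∀ i ∈ h n, i < n) ∧
    (∀ n, (h n).card ≤ a n) ∧
    (∀ w : List α, w ∈ L ↔ markWord w (h w.length) ∈ M.accepts)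

/-- The language `L_f`: a word `w` of length `n` over `{0,1}` is a member iff for
every position `i` with `1 ≤ i ≤ n`, the `i`-th symbol of `w` (1-based) is `1`
exactly when `i` is a positive multiple of `f' n` (`false` plays the role of `0`
and `true` the role of `1`). -/
def Lf (f' : ℕ → ℕ) : Set (List Bool) :=
  { w | ∀ i : ℕ, 1 ≤ i → i ≤ w.length →
      (w.getD (i - 1) false = true ↔ ∃ k : ℕ, 0 < k ∧ i = k * f' w.length) }

/-! Put an inkdot on each position of the unique member of `L_f` of length `n` that carries a `1`,
i.e. on the positive multiples of `c = ⌈n / f(n)⌉` up to `n`; a two-state automaton then checks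
that every letter agrees with its mark. There are `⌊n / c⌋ ≤ f(n)` such positions, since
`n ≤ f(n) * c`. -/

def diagonalDFA (α : Type*) [DecidableEq α] : DFA (α × α) Bool :=
  ⟨fun s p => s && decide (p.1 = p.2), true, {true}⟩

lemma diagonalDFA_evalFrom {α : Type*} [DecidableEq α] (s : Bool) (l : List (α × α)) :
    (diagonalDFA α).evalFrom s l = (s && l.all fun p => decide (p.1 = p.2)) := by
  induction l generalizing s with
  | nil => simp [DFA.evalFrom_nil]
  | cons p l ih =>
    rw [DFA.evalFrom_cons, ih]
    simp [diagonalDFA, Bool.and_assoc]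

lemma mem_diagonalDFA_accepts {α : Type*} [DecidableEq α] {l : List (α × α)} :
    l ∈ (diagonalDFA α).accepts ↔ ∀ p ∈ l, p.1 = p.2 := by
  rw [DFA.mem_accepts, DFA.eval, diagonalDFA_evalFrom]
  simp [diagonalDFA]

lemma length_markWord {α : Type*} (w : List α) (S : Finset ℕ) :
    (markWord w S).length = w.length := by
  simp [markWord]

lemma getElem_markWord {α : Type*} (w : List α) (S : Finset ℕ) (j : ℕ)
    (hj : j < (markWord w S).length) :
    (markWord w S)[j] = (w[j]'(by simpa [length_markWord] using hj), decide (j ∈ S)) := by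
  simp [markWord]

lemma markWord_mem_diagonalDFA_accepts_iff (w : List Bool) (S : Finset ℕ) :
    markWord w S ∈ (diagonalDFA Bool).accepts ↔
      ∀ (j : ℕ) (hj : j < w.length), (w[j] = true ↔ j ∈ S) := by
  rw [mem_diagonalDFA_accepts, List.forall_mem_iff_forall_getElem]
  simp only [getElem_markWord, length_markWord]
  exact forall₂_congr fun j hj => by cases w[j] <;> simp

theorem recognizedWithInkdots_of_mem_iff {L : Set (List Bool)} {a : ℕ → ℕ} (S : ℕ → Finset ℕ)
    (hS : ∀ n, ∀ i ∈ S n, i < n) (hcard : ∀ n, (S n).card ≤ a n)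
    (hL : ∀ w : List Bool, w ∈ L ↔ ∀ (j : ℕ) (hj : j < w.length), (w[j] = true ↔ j ∈ S w.length)) :
    RecognizedWithInkdots L a :=
  ⟨Bool, inferInstance, diagonalDFA Bool, S, hS, hcard,
    fun w => (hL w).trans (markWord_mem_diagonalDFA_accepts_iff w _).symm⟩

lemma mem_Lf_iff {f' : ℕ → ℕ} {w : List Bool} :
    w ∈ Lf f' ↔ ∀ (j : ℕ) (hj : j < w.length),
      (w[j] = true ↔ ∃ k, 0 < k ∧ j + 1 = k * f' w.length) := by
  constructor
  · intro hw j hj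
    simpa [hj] using hw (j + 1) (by omega) hj
  · intro hw i hi1 hin
    obtain ⟨j, rfl⟩ : ∃ j, i = j + 1 := ⟨i - 1, by omega⟩
    have hj : j < w.length := hin
    simpa [hj] using hw j hj

def multiplePositions (c n : ℕ) : Finset ℕ :=
  (Finset.Icc 1 (n / c)).image (fun k => k * c - 1)

lemma mem_multiplePositions {c n j : ℕ} :
    j ∈ multiplePositions c n ↔ j < n ∧ ∃ k, 0 < k ∧ j + 1 = k * c := by
  simp only [multiplePositions, Finset.mem_image, Finset.mem_Icc]
  rcases Nat.eq_zero_or_pos c with rfl | hc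
  · simp
  constructor
  · rintro ⟨k, ⟨hk1, hkn⟩, rfl⟩
    have hkc : k * c ≤ n := (Nat.le_div_iff_mul_le hc).1 hkn
    have : 1 ≤ k * c := Nat.one_le_iff_ne_zero.2 (by positivity)
    exact ⟨by omega, k, hk1, by omega⟩
  · rintro ⟨hjn, k, hk, hjk⟩
    exact ⟨k, ⟨hk, (Nat.le_div_iff_mul_le hc).2 (by omega)⟩, by omega⟩

lemma card_multiplePositions_le (c n : ℕ) : (multiplePositions c n).card ≤ n / c :=
  Finset.card_image_le.trans (by simp)

lemma div_ceilDiv_le (n m : ℕ) : n / (n ⌈/⌉ m) ≤ m := by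
  rcases Nat.eq_zero_or_pos m with rfl | hm
  · simp
  exact Nat.div_le_of_le_mul (by simpa [mul_comm] using le_smul_ceilDiv (b := n) hm)

open Filter in
theorem Lf_mem_inkdots_general (f : ℕ → ℕ) :
    RecognizedWithInkdots (Lf (fun n => n ⌈/⌉ f n)) f := by
  refine recognizedWithInkdots_of_mem_iff (fun n => multiplePositions (n ⌈/⌉ f n) n)
    (fun n i hi => (mem_multiplePositions.1 hi).1)
    (fun n => (card_multiplePositions_le _ n).trans (div_ceilDiv_le n (f n))) fun w => ?_
  rw [mem_Lf_iff]
  refine forall₂_congr fun j hj => ?_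
  rw [mem_multiplePositions, and_iff_right hj]

open Filter in
/-- for `f ∈ ω(1) ∩ o(n)` with `f(n) ≥ 1` for `n ≥ 1`, the language
`L_f` (with `f'(n) = ⌈n / f(n)⌉`) is recognized with at most `f(n)` inkdots of advice. -/
theorem Lf_mem_inkdots (f : ℕ → ℕ)
    (hf0 : ∀ n, 1 ≤ n → 1 ≤ f n)
    (hf1 : Tendsto f atTop atTop)
    (hf2 : Tendsto (fun n => (f n : ℝ) / n) atTop (nhds 0)) :
    RecognizedWithInkdots (Lf (fun n => n ⌈/⌉ f n)) f :=
  Lf_mem_inkdots_general f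
end

section
/- For every integer k > 1, no deterministic finite automaton with fewer than k states recognizes LANG_k = { w ∈ {0,1}* : |w| < k, or the (i+1)-st symbol of w equals 1 where i = |w| mod k } with the help of binary prefix advice, where the advice string may have arbitrary length depending on the input length. -/
/-!
Let `m < k` be the number of states, fix a large input length `n ≡ k - 1 (mod k)` and let `s` be
the state reached after the advice for `n`. From `s`, a word of length `n` is accepted iff its
bit at position `k - 1` is `1`. Along a run of `0`s the states of a DFA become periodic after
`m` steps, with period dividing `m!`. Since `k - 1 ≥ m`, the words `0^(k-1+m!) 1 0^(n-k-m!)`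
and `0^(k-1) 1 0^(n-k)` therefore lead from `s` to the same state, yet only the second one has
a `1` at position `k - 1`.
-/

/-- The language `LANG_k`: a word `w` over `{0,1}` is a member iff `|w| < k`, or the
`(i+1)`-st symbol of `w` (i.e. the symbol at 0-based index `i`) equals `1`, where
`i = |w| mod k` (`false` plays the role of `0` and `true` the role of `1`). -/
def LANG (k : ℕ) : Set (List Bool) :=
  { w | w.length < k ∨ w.getD (w.length % k) false = true }

open scoped Nat

namespace Function

variable {α : Type*} [Fintype α]

theorem iterate_card_mem_periodicPts (f : α → α) (x : α) :
    f^[Fintype.card α] x ∈ periodicPts f := by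
  obtain ⟨i, j, hne, heq⟩ := Fintype.exists_ne_map_eq_of_card_lt
    (fun i : Fin (Fintype.card α + 1) => f^[i] x) (by simp)
  wlog hij : i < j generalizing i j
  · exact this j i hne.symm heq.symm (lt_of_le_of_ne (not_lt.1 hij) hne.symm)
  have hper : IsPeriodicPt f (j - i) (f^[i] x) := by
    rw [IsPeriodicPt, IsFixedPt, ← iterate_add_apply, Nat.sub_add_cancel hij.le]
    exact heq.symm
  have hcard := hper.apply_iterate (Fintype.card α - i)
  rw [← iterate_add_apply, Nat.sub_add_cancel (by omega)] at hcard
  exact mk_mem_periodicPts (by omega) hcard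

theorem iterate_add_factorial_card (f : α → α) (x : α) {n : ℕ} (hn : Fintype.card α ≤ n) :
    f^[n + (Fintype.card α)!] x = f^[n] x := by
  have hper := (isPeriodicPt_factorial_card_of_mem_periodicPts
    (iterate_card_mem_periodicPts f x)).apply_iterate (n - Fintype.card α)
  rw [← iterate_add_apply, Nat.sub_add_cancel hn] at hper
  rw [add_comm, iterate_add_apply]
  exact hper

end Function

namespace DFA

variable {α σ : Type*} (M : DFA α σ)

theorem evalFrom_replicate (s : σ) (a : α) (n : ℕ) :
    M.evalFrom s (List.replicate n a) = (M.step · a)^[n] s := by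
  induction n generalizing s with
  | zero => rfl
  | succ n ih => rw [List.replicate_succ, evalFrom_cons, ih, Function.iterate_succ_apply]

variable [Fintype σ]

theorem evalFrom_replicate_add_factorial (s : σ) (a : α) {n : ℕ} (hn : Fintype.card σ ≤ n) :
    M.evalFrom s (List.replicate (n + (Fintype.card σ)!) a) =
      M.evalFrom s (List.replicate n a) := by
  rw [evalFrom_replicate, evalFrom_replicate, Function.iterate_add_factorial_card _ _ hn]

theorem evalFrom_replicate_add_factorial_append_cons (s : σ) (a b : α) {i j : ℕ}
    (hi : Fintype.card σ ≤ i) (hj : Fintype.card σ ≤ j) :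
    M.evalFrom s (List.replicate (i + (Fintype.card σ)!) a ++ b :: List.replicate j a) =
      M.evalFrom s (List.replicate i a ++ b :: List.replicate (j + (Fintype.card σ)!) a) := by
  rw [evalFrom_of_append, evalFrom_of_append, evalFrom_cons, evalFrom_cons,
    evalFrom_replicate_add_factorial M s a hi, evalFrom_replicate_add_factorial M _ a hj]

end DFA

theorem mem_LANG_iff_getD {k : ℕ} {w : List Bool} (hw : k ≤ w.length) :
    w ∈ LANG k ↔ w.getD (w.length % k) false = true := by
  simp [LANG, not_lt.2 hw]

theorem LANG_prefix_advice_lower_bound_general (k : ℕ)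
    (σ : Type) [Fintype σ] (M : DFA (Bool ⊕ Bool) σ) (h : ℕ → List Bool)
    (hM : ∀ w : List Bool, w ∈ LANG k ↔
        ((h w.length).map Sum.inl ++ w.map Sum.inr) ∈ M.accepts) :
    k ≤ Fintype.card σ := by
  by_contra! hcard
  set m := Fintype.card σ
  set n := k * (m ! + k) + (k - 1)
  have hn_mod : n % k = k - 1 := by
    rw [Nat.mul_add_mod, Nat.mod_eq_of_lt (by omega)]
  have hn_large : m ! + k ≤ k * (m ! + k) := Nat.le_mul_of_pos_left _ (by omega)
  set s := M.evalFrom M.start ((h n).map Sum.inl)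
  have accept_iff : ∀ w : List Bool, w.length = n →
      (M.evalFrom s (w.map Sum.inr) ∈ M.accept ↔ w.getD (k - 1) false = true) := by
    intro w hw
    rw [← hn_mod, ← hw, ← mem_LANG_iff_getD (by omega), hM, DFA.mem_accepts, DFA.eval,
      DFA.evalFrom_of_append, hw]
  set late := List.replicate (k - 1 + m !) false ++ true :: List.replicate (n - k - m !) false
  set early := List.replicate (k - 1) false ++ true :: List.replicate (n - k - m ! + m !) false
  have same_state : M.evalFrom s (late.map Sum.inr) = M.evalFrom s (early.map Sum.inr) := by
    simpa [late, early] using M.evalFrom_replicate_add_factorial_append_cons s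
      (Sum.inr false) (Sum.inr true) (i := k - 1) (j := n - k - m !) (by omega) (by omega)
  have late_rejected := accept_iff late (by simp [late]; omega)
  have early_accepted := accept_iff early (by simp [early]; omega)
  have late_bit : late.getD (k - 1) false = false := by
    rw [List.getD_append _ _ _ _ (by simpa using m.factorial_pos)]
    simp
  have early_bit : early.getD (k - 1) false = true := by
    simp [early]
  rw [same_state, early_accepted, early_bit, late_bit] at late_rejected
  exact Bool.false_ne_true (late_rejected.mp rfl)

/-- no dfa with fewer than `k` states recognizes `LANG_k` with binary
prefix advice of arbitrary length. -/
theorem LANG_prefix_advice_lower_bound (k : ℕ) (hk : 1 < k)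
    (σ : Type) [Fintype σ] (M : DFA (Bool ⊕ Bool) σ) (h : ℕ → List Bool)
    (hM : ∀ w : List Bool, w ∈ LANG k ↔
        ((h w.length).map Sum.inl ++ w.map Sum.inr) ∈ M.accepts) :
    k ≤ Fintype.card σ :=
  LANG_prefix_advice_lower_bound_general k σ M h hM
end
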